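/- arXiv:2112.15073 — 2 statements merged into one kernel-verified Lean document; each statement's English description precedes it below -/
import Mathlib

section
/- For any measurable sets Y₀,…,Y_K and any measure-preserving automorphism F of (𝒳, ℬ, μ), ‖π_{Y_K} U_F π_{Y_{K−1}} U_F ⋯ U_F π_{Y_1} U_F π_{Y_0}‖_μ² = μ(Y_K ∩ F⁻¹(Y_{K−1}) ∩ ⋯ ∩ F^{−K+1}(Y_1) ∩ F^{−K}(Y_0)). -/
/-!
The chain operator acts as `f ↦ 𝟙_Z · (f ∘ F^K)`, where `Z` is the intersection on the right-hand
side. For such an operator `W`, the norm of `W π_A` is `1` when `μ (Z ∩ F^{-K} A) > 0` (test it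
on the indicator of `F^K (Z ∩ F^{-K} A)`, on which `W π_A` is the isometry `f ↦ f ∘ F^K`) and `0`
when that set is null. Hence every partition gives `ℳ ≥ ∑ⱼ μ (Z ∩ F^{-K} Yⱼ) ≥ μ Z`, with equality
for the partition `{F^K Z, (F^K Z)ᶜ}`.
-/

open MeasureTheory

namespace MuNorm

variable {𝒳 : Type*} [MeasurableSpace 𝒳]

/-- A finite measurable partition of `𝒳` (up to measure zero). -/
structure Partition (μ : Measure 𝒳) where
  J : ℕ
  Y : Fin J → Set 𝒳
  meas : ∀ j, MeasurableSet (Y j)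
  cover : μ (Set.univ \ ⋃ j, Y j) = 0
  disj : ∀ j k, j ≠ k → μ (Y j ∩ Y k) = 0

/-- `ℳ_χ(W) = ∑_j μ(Y_j) ‖W π_{Y_j}‖²`. -/
noncomputable def M (μ : Measure 𝒳)
    (proj : Set 𝒳 → (Lp ℂ 2 μ →L[ℂ] Lp ℂ 2 μ))
    (W : Lp ℂ 2 μ →L[ℂ] Lp ℂ 2 μ) (χ : Partition μ) : ℝ :=
  ∑ j, (μ (χ.Y j)).toReal * ‖W.comp (proj (χ.Y j))‖ ^ 2

/-- `‖W‖_μ = inf_χ sqrt(ℳ_χ(W))`. -/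
noncomputable def munorm (μ : Measure 𝒳)
    (proj : Set 𝒳 → (Lp ℂ 2 μ →L[ℂ] Lp ℂ 2 μ))
    (W : Lp ℂ 2 μ →L[ℂ] Lp ℂ 2 μ) : ℝ :=
  ⨅ χ : Partition μ, Real.sqrt (M μ proj W χ)

/-- `proj Y` is the operator of multiplication by the indicator of `Y`. -/
def IsIndicatorProj (μ : Measure 𝒳)
    (proj : Set 𝒳 → (Lp ℂ 2 μ →L[ℂ] Lp ℂ 2 μ)) : Prop :=
  ∀ Y : Set 𝒳, MeasurableSet Y → ∀ f : Lp ℂ 2 μ,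
    (proj Y f : 𝒳 → ℂ) =ᵐ[μ] Y.indicator f

/-- The operator `π_{Y_K} U π_{Y_{K-1}} U ⋯ U π_{Y_1} U π_{Y_0}`. -/
noncomputable def chainOp (μ : Measure 𝒳)
    (proj : Set 𝒳 → (Lp ℂ 2 μ →L[ℂ] Lp ℂ 2 μ))
    (U : Lp ℂ 2 μ →L[ℂ] Lp ℂ 2 μ) :
    (K : ℕ) → (Fin (K + 1) → Set 𝒳) → (Lp ℂ 2 μ →L[ℂ] Lp ℂ 2 μ)
  | 0, Y => proj (Y 0)
  | K + 1, Y => (proj (Y (Fin.last (K + 1)))).comp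
      (U.comp (chainOp μ proj U K fun i => Y i.castSucc))

def IsIndicatorComp (μ : Measure 𝒳) (V : Lp ℂ 2 μ →L[ℂ] Lp ℂ 2 μ) (S : Set 𝒳)
    (T : 𝒳 → 𝒳) : Prop :=
  ∀ f : Lp ℂ 2 μ, (V f : 𝒳 → ℂ) =ᵐ[μ] S.indicator (f ∘ T)

theorem iInter_iterate_preimage_succ {α : Type*} (F : α → α) (K : ℕ)
    (Y : Fin (K + 2) → Set α) :
    ⋂ k : Fin (K + 2), F^[K + 1 - k] ⁻¹' Y k
      = Y (Fin.last (K + 1)) ∩ F ⁻¹' ⋂ k : Fin (K + 1), F^[K - k] ⁻¹' Y k.castSucc := by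
  ext x
  have hsub (k : Fin (K + 1)) : K + 1 - k = K - k + 1 := by omega
  simp [Fin.forall_fin_succ', hsub, Function.iterate_succ_apply, and_comm]

section IsIndicatorComp

variable {μ : Measure 𝒳} {V V' : Lp ℂ 2 μ →L[ℂ] Lp ℂ 2 μ} {S S' : Set 𝒳} {T T' : 𝒳 → 𝒳}

theorem IsIndicatorProj.isIndicatorComp {proj : Set 𝒳 → (Lp ℂ 2 μ →L[ℂ] Lp ℂ 2 μ)}
    (hproj : IsIndicatorProj μ proj) {A : Set 𝒳} (hA : MeasurableSet A) :
    IsIndicatorComp μ (proj A) A id :=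
  hproj A hA

theorem IsIndicatorComp.comp (hV : IsIndicatorComp μ V S T) (hV' : IsIndicatorComp μ V' S' T')
    (hT : Measure.QuasiMeasurePreserving T μ μ) :
    IsIndicatorComp μ (V.comp V') (S ∩ T ⁻¹' S') (T' ∘ T) := fun f =>
  calc (V (V' f) : 𝒳 → ℂ)
      =ᵐ[μ] S.indicator (V' f ∘ T) := hV _
    _ =ᵐ[μ] S.indicator (S'.indicator (f ∘ T') ∘ T) :=
        (hT.ae_eq_comp (hV' f)).indicator
    _ = (S ∩ T ⁻¹' S').indicator (f ∘ T' ∘ T) := by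
        rw [← Set.indicator_indicator]
        congr 1

theorem IsIndicatorComp.eq_zero (hV : IsIndicatorComp μ V S T) (hS : μ S = 0) : V = 0 := by
  ext1 f
  rw [zero_apply, Lp.eq_zero_iff_ae_eq_zero]
  exact (hV f).trans (Set.indicator_ae_eq_zero.mpr (measure_mono_null Set.inter_subset_left hS))

theorem IsIndicatorComp.norm_le_one (hV : IsIndicatorComp μ V S T)
    (hT : MeasurePreserving T μ μ) : ‖V‖ ≤ 1 := by
  refine ContinuousLinearMap.opNorm_le_bound _ zero_le_one fun f => ?_
  rw [one_mul, Lp.norm_def, Lp.norm_def, eLpNorm_congr_ae (hV f)]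
  refine ENNReal.toReal_mono (Lp.eLpNorm_ne_top f) ((eLpNorm_indicator_le _).trans ?_)
  rw [eLpNorm_comp_measurePreserving (Lp.aestronglyMeasurable f) hT]

theorem IsIndicatorComp.one_le_norm [IsFiniteMeasure μ] (hV : IsIndicatorComp μ V S T)
    (hT : MeasurePreserving T μ μ) {g : 𝒳 → 𝒳} (hg : Measurable g)
    (hgT : Function.LeftInverse g T) (hS : MeasurableSet S) (hμS : μ S ≠ 0) : 1 ≤ ‖V‖ := by
  have hTB : T ⁻¹' (g ⁻¹' S) = S := by
    rw [← Set.preimage_comp, hgT.comp_eq_id, Set.preimage_id]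
  set f := indicatorConstLp 2 (hS.preimage hg) (measure_ne_top μ _) (1 : ℂ)
  have hf : (f : 𝒳 → ℂ) ∘ T =ᵐ[μ] S.indicator 1 := by
    refine (hT.quasiMeasurePreserving.ae_eq_comp indicatorConstLp_coeFn).trans (.of_eq ?_)
    ext x
    rw [Function.comp_apply, ← Set.indicator_comp_right, hTB]
    rfl
  have hVf : ‖V f‖ = ‖f‖ := by
    rw [Lp.norm_def, Lp.norm_def, eLpNorm_congr_ae (hV f),
      ← eLpNorm_comp_measurePreserving (Lp.aestronglyMeasurable f) hT]
    refine congrArg ENNReal.toReal (eLpNorm_congr_ae ?_)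
    calc S.indicator ((f : 𝒳 → ℂ) ∘ T)
        =ᵐ[μ] S.indicator (S.indicator 1) := hf.indicator
      _ = S.indicator 1 := by rw [Set.indicator_indicator, Set.inter_self]
      _ =ᵐ[μ] (f : 𝒳 → ℂ) ∘ T := hf.symm
  have hf_pos : 0 < ‖f‖ := by
    rw [norm_indicatorConstLp two_ne_zero ENNReal.ofNat_ne_top, norm_one, one_mul,
      measureReal_def, ← hT.measure_preimage (hS.preimage hg).nullMeasurableSet, hTB]
    exact Real.rpow_pos_of_pos (ENNReal.toReal_pos hμS (measure_ne_top μ S)) _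
  have := V.le_opNorm f
  rw [hVf] at this
  exact (le_mul_iff_one_le_left hf_pos).mp this

theorem chainOp_isIndicatorComp {proj : Set 𝒳 → (Lp ℂ 2 μ →L[ℂ] Lp ℂ 2 μ)}
    (hproj : IsIndicatorProj μ proj) {F : 𝒳 → 𝒳} (hF : Measure.QuasiMeasurePreserving F μ μ)
    {U : Lp ℂ 2 μ →L[ℂ] Lp ℂ 2 μ} (hU : ∀ f : Lp ℂ 2 μ, (U f : 𝒳 → ℂ) =ᵐ[μ] fun x => f (F x)) :
    ∀ (K : ℕ) (Y : Fin (K + 1) → Set 𝒳), (∀ k, MeasurableSet (Y k)) →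
      IsIndicatorComp μ (chainOp μ proj U K Y) (⋂ k : Fin (K + 1), F^[K - k] ⁻¹' Y k) F^[K]
  | 0, Y, hY => by
    have hY0 : ⋂ k : Fin 1, F^[0 - k] ⁻¹' Y k = Y 0 := by
      ext
      simp [Fin.forall_fin_one]
    rw [hY0]
    exact hproj.isIndicatorComp (hY 0)
  | K + 1, Y, hY => by
    have hU' : IsIndicatorComp μ U Set.univ F := fun f => by
      rw [Set.indicator_univ]
      exact hU f
    rw [chainOp, iInter_iterate_preimage_succ, Function.iterate_succ]
    simpa only [Set.preimage_id, Set.univ_inter, Function.comp_id] using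
      (hproj.isIndicatorComp (hY _)).comp
        (hU'.comp (chainOp_isIndicatorComp hproj hF hU K _ fun k => hY _) hF)
        (Measure.QuasiMeasurePreserving.id μ)

end IsIndicatorComp

def Partition.ofSet (μ : Measure 𝒳) {A : Set 𝒳} (hA : MeasurableSet A) : Partition μ where
  J := 2
  Y := ![A, Aᶜ]
  meas := Fin.forall_fin_two.mpr ⟨hA, hA.compl⟩
  cover := by
    rw [Set.sdiff_eq_empty.mpr fun x _ => ?_, measure_empty]
    by_cases hx : x ∈ A
    exacts [Set.mem_iUnion.mpr ⟨0, hx⟩, Set.mem_iUnion.mpr ⟨1, hx⟩]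
  disj := by
    intro j k hjk
    fin_cases j <;> fin_cases k <;> simp_all

theorem Partition.measure_le_sum_inter_preimage {μ : Measure 𝒳} (χ : Partition μ) {T : 𝒳 → 𝒳}
    (hT : Measure.QuasiMeasurePreserving T μ μ) (Z : Set 𝒳) :
    μ Z ≤ ∑ j, μ (Z ∩ T ⁻¹' χ.Y j) := by
  have hnull : μ (Z \ ⋃ j, Z ∩ T ⁻¹' χ.Y j) = 0 := by
    refine measure_mono_null (fun x hx => ?_) (hT.preimage_null χ.cover)
    simp_all
  calc μ Z ≤ μ (⋃ j, Z ∩ T ⁻¹' χ.Y j) := measure_mono_ae (ae_le_set.mpr hnull)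
    _ ≤ ∑ j, μ (Z ∩ T ⁻¹' χ.Y j) := measure_iUnion_fintype_le μ _

section munorm

variable {μ : Measure 𝒳} {proj : Set 𝒳 → (Lp ℂ 2 μ →L[ℂ] Lp ℂ 2 μ)}
  {V : Lp ℂ 2 μ →L[ℂ] Lp ℂ 2 μ}

theorem M_nonneg (χ : Partition μ) : 0 ≤ M μ proj V χ :=
  Finset.sum_nonneg fun _ _ => by positivity

theorem M_ofSet {A : Set 𝒳} (hA : MeasurableSet A) :
    M μ proj V (Partition.ofSet μ hA)
      = (μ A).toReal * ‖V.comp (proj A)‖ ^ 2 + (μ Aᶜ).toReal * ‖V.comp (proj Aᶜ)‖ ^ 2 :=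
  Fin.sum_univ_two _

theorem munorm_sq_eq_of_isLeast {c : ℝ} (h : IsLeast (Set.range (M μ proj V)) c) :
    munorm μ proj V ^ 2 = c := by
  have hsqrt : IsLeast (Set.range fun χ => Real.sqrt (M μ proj V χ)) (Real.sqrt c) := by
    rw [Set.range_comp' Real.sqrt]
    exact Real.sqrt_monotone.map_isLeast h
  obtain ⟨χ, rfl⟩ := h.1
  rw [munorm, iInf, hsqrt.csInf_eq, Real.sq_sqrt (M_nonneg χ)]

variable {Z : Set 𝒳} {T g : 𝒳 → 𝒳}

theorem IsIndicatorComp.exists_M_le (hV : IsIndicatorComp μ V Z T)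
    (hproj : IsIndicatorProj μ proj) (hT : MeasurePreserving T μ μ) (hg : Measurable g)
    (hgT : Function.LeftInverse g T) (hZ : MeasurableSet Z) :
    ∃ χ : Partition μ, M μ proj V χ ≤ (μ Z).toReal := by
  have hA : MeasurableSet (g ⁻¹' Z) := hZ.preimage hg
  have hTA : T ⁻¹' (g ⁻¹' Z) = Z := by
    rw [← Set.preimage_comp, hgT.comp_eq_id, Set.preimage_id]
  have h_in : ‖V.comp (proj (g ⁻¹' Z))‖ ≤ 1 :=
    (hV.comp (hproj.isIndicatorComp hA) hT.quasiMeasurePreserving).norm_le_one hT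
  have h_out : V.comp (proj (g ⁻¹' Z)ᶜ) = 0 :=
    (hV.comp (hproj.isIndicatorComp hA.compl) hT.quasiMeasurePreserving).eq_zero
      (by rw [Set.preimage_compl, hTA, Set.inter_compl_self, measure_empty])
  refine ⟨Partition.ofSet μ hA, ?_⟩
  rw [M_ofSet, h_out, norm_zero, ← hT.measure_preimage hA.nullMeasurableSet, hTA]
  have : ‖V.comp (proj (g ⁻¹' Z))‖ ^ 2 ≤ 1 := pow_le_one₀ (norm_nonneg _) h_in
  nlinarith [ENNReal.toReal_nonneg (a := μ Z)]

variable [IsFiniteMeasure μ]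

theorem IsIndicatorComp.toReal_measure_inter_preimage_le (hV : IsIndicatorComp μ V Z T)
    (hproj : IsIndicatorProj μ proj) (hT : MeasurePreserving T μ μ) (hg : Measurable g)
    (hgT : Function.LeftInverse g T) (hZ : MeasurableSet Z) {A : Set 𝒳} (hA : MeasurableSet A) :
    (μ (Z ∩ T ⁻¹' A)).toReal ≤ (μ A).toReal * ‖V.comp (proj A)‖ ^ 2 := by
  by_cases h0 : μ (Z ∩ T ⁻¹' A) = 0
  · rw [h0, ENNReal.toReal_zero]
    positivity
  have hVA : IsIndicatorComp μ (V.comp (proj A)) (Z ∩ T ⁻¹' A) T :=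
    hV.comp (hproj.isIndicatorComp hA) hT.quasiMeasurePreserving
  have h_one := hVA.one_le_norm hT hg hgT (hZ.inter (hA.preimage hT.measurable)) h0
  calc (μ (Z ∩ T ⁻¹' A)).toReal ≤ (μ (T ⁻¹' A)).toReal :=
        ENNReal.toReal_mono (measure_ne_top μ _) (measure_mono Set.inter_subset_right)
    _ = (μ A).toReal := by rw [hT.measure_preimage hA.nullMeasurableSet]
    _ ≤ (μ A).toReal * ‖V.comp (proj A)‖ ^ 2 :=
        le_mul_of_one_le_right ENNReal.toReal_nonneg (one_le_pow₀ h_one)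

theorem IsIndicatorComp.toReal_measure_le_M (hV : IsIndicatorComp μ V Z T)
    (hproj : IsIndicatorProj μ proj) (hT : MeasurePreserving T μ μ) (hg : Measurable g)
    (hgT : Function.LeftInverse g T) (hZ : MeasurableSet Z) (χ : Partition μ) :
    (μ Z).toReal ≤ M μ proj V χ :=
  calc (μ Z).toReal ≤ ∑ j, (μ (Z ∩ T ⁻¹' χ.Y j)).toReal := by
        rw [← ENNReal.toReal_sum fun j _ => measure_ne_top μ _]
        exact ENNReal.toReal_mono (ENNReal.sum_ne_top.mpr fun j _ => measure_ne_top μ _)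
          (χ.measure_le_sum_inter_preimage hT.quasiMeasurePreserving Z)
    _ ≤ M μ proj V χ := Finset.sum_le_sum fun j _ =>
        hV.toReal_measure_inter_preimage_le hproj hT hg hgT hZ (χ.meas j)

theorem IsIndicatorComp.munorm_sq_eq (hV : IsIndicatorComp μ V Z T)
    (hproj : IsIndicatorProj μ proj) (hT : MeasurePreserving T μ μ) (hg : Measurable g)
    (hgT : Function.LeftInverse g T) (hZ : MeasurableSet Z) :
    munorm μ proj V ^ 2 = (μ Z).toReal := by
  have h_le := hV.toReal_measure_le_M hproj hT hg hgT hZ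
  obtain ⟨χ, hχ⟩ := hV.exists_M_le hproj hT hg hgT hZ
  exact munorm_sq_eq_of_isLeast
    ⟨⟨χ, le_antisymm hχ (h_le χ)⟩, Set.forall_mem_range.mpr h_le⟩

end munorm

theorem munorm_chainOp_sq (μ : Measure 𝒳) [IsProbabilityMeasure μ]
    (proj : Set 𝒳 → (Lp ℂ 2 μ →L[ℂ] Lp ℂ 2 μ))
    (hproj : IsIndicatorProj μ proj)
    (F : 𝒳 ≃ᵐ 𝒳) (hF : MeasurePreserving F μ μ)
    (U : Lp ℂ 2 μ →L[ℂ] Lp ℂ 2 μ)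
    (hU : ∀ f : Lp ℂ 2 μ, (U f : 𝒳 → ℂ) =ᵐ[μ] fun x => f (F x))
    (K : ℕ) (Y : Fin (K + 1) → Set 𝒳) (hY : ∀ k, MeasurableSet (Y k)) :
    munorm μ proj (chainOp μ proj U K Y) ^ 2
      = (μ (⋂ k : Fin (K + 1), (⇑F)^[K - (k : ℕ)] ⁻¹' Y k)).toReal :=
  (chainOp_isIndicatorComp hproj hF.quasiMeasurePreserving hU K Y hY).munorm_sq_eq hproj
    (hF.iterate K) (F.symm.measurable.iterate K) (Function.LeftInverse.iterate F.symm_apply_apply K)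
    (MeasurableSet.iInter fun k => (hY k).preimage (F.measurable.iterate _))

end MuNorm
end

section
/- If the probability measure μ has no atoms, then every compact operator W on L²(𝒳, μ) has ‖W‖_μ = 0; consequently ‖W + W₀‖_μ = ‖W‖_μ for every bounded W and compact W₀. -/
open MeasureTheory

namespace MuNorm

variable {𝒳 : Type*} [MeasurableSpace 𝒳]

section Aux

set_option linter.unusedSectionVars false

open ENNReal

variable {μ : Measure 𝒳} [IsProbabilityMeasure μ]
  {proj : Set 𝒳 → (Lp ℂ 2 μ →L[ℂ] Lp ℂ 2 μ)}

lemma norm_proj_apply_le (hproj : IsIndicatorProj μ proj) {Y : Set 𝒳}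
    (hY : MeasurableSet Y) (f : Lp ℂ 2 μ) : ‖proj Y f‖ ≤ ‖f‖ := by
  rw [Lp.norm_def, Lp.norm_def]
  refine ENNReal.toReal_mono (Lp.eLpNorm_ne_top f) ?_
  calc eLpNorm (proj Y f) 2 μ = eLpNorm (Y.indicator f) 2 μ :=
        eLpNorm_congr_ae (hproj Y hY f)
    _ ≤ eLpNorm f 2 μ := eLpNorm_indicator_le _

lemma norm_proj_le_one (hproj : IsIndicatorProj μ proj) {Y : Set 𝒳}
    (hY : MeasurableSet Y) : ‖proj Y‖ ≤ 1 := by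
  refine ContinuousLinearMap.opNorm_le_bound _ zero_le_one fun f => ?_
  rw [one_mul]; exact norm_proj_apply_le hproj hY f

lemma proj_comp_proj (hproj : IsIndicatorProj μ proj) {Z Y : Set 𝒳}
    (hZ : MeasurableSet Z) (hY : MeasurableSet Y) (hZY : Z ⊆ Y) :
    (proj Y).comp (proj Z) = proj Z := by
  ext f
  simp only [ContinuousLinearMap.comp_apply]
  have h1 := hproj Y hY (proj Z f)
  have h2 := (hproj Z hZ f).indicator (s := Y)
  refine (h1.trans (h2.trans ?_)).trans (hproj Z hZ f).symm
  rw [Set.indicator_indicator, Set.inter_eq_right.2 hZY]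

lemma norm_comp_proj_mono (hproj : IsIndicatorProj μ proj) {Z Y : Set 𝒳}
    (hZ : MeasurableSet Z) (hY : MeasurableSet Y) (hZY : Z ⊆ Y)
    (W : Lp ℂ 2 μ →L[ℂ] Lp ℂ 2 μ) :
    ‖W.comp (proj Z)‖ ≤ ‖W.comp (proj Y)‖ := by
  have : W.comp (proj Z) = (W.comp (proj Y)).comp (proj Z) := by
    rw [ContinuousLinearMap.comp_assoc, proj_comp_proj hproj hZ hY hZY]
  rw [this]
  calc ‖(W.comp (proj Y)).comp (proj Z)‖ ≤ ‖W.comp (proj Y)‖ * ‖proj Z‖ :=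
        ContinuousLinearMap.opNorm_comp_le _ _
    _ ≤ ‖W.comp (proj Y)‖ * 1 :=
        mul_le_mul_of_nonneg_left (norm_proj_le_one hproj hZ) (norm_nonneg _)
    _ = ‖W.comp (proj Y)‖ := mul_one _

lemma inner_proj_left (hproj : IsIndicatorProj μ proj) {Y : Set 𝒳}
    (hY : MeasurableSet Y) (a b : Lp ℂ 2 μ) :
    (inner ℂ (proj Y a) b) = inner ℂ a (proj Y b) := by
  rw [L2.inner_def, L2.inner_def]
  apply integral_congr_ae
  filter_upwards [hproj Y hY a, hproj Y hY b] with x h1 h2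
  rw [h1, h2]
  by_cases hx : x ∈ Y <;>
    simp [Set.indicator_apply, hx, RCLike.inner_apply]

lemma exists_unit_vector (T : Lp ℂ 2 μ →L[ℂ] Lp ℂ 2 μ) {ε : ℝ} (hε : 0 ≤ ε)
    (h : ¬ ‖T‖ ≤ ε) : ∃ f, ‖f‖ ≤ 1 ∧ ε < ‖T f‖ := by
  by_contra hc
  push_neg at hc
  refine h (T.opNorm_le_bound hε fun f => ?_)
  rcases eq_or_ne f 0 with rfl | hf
  · simp
  · have hnf : 0 < ‖f‖ := norm_pos_iff.2 hf
    have h1 : ‖((‖f‖⁻¹ : ℝ) : ℂ) • f‖ ≤ 1 := by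
      rw [norm_smul, Complex.norm_real, Real.norm_eq_abs,
        abs_of_nonneg (inv_nonneg.2 hnf.le), inv_mul_cancel₀ hnf.ne']
    have h2 := hc _ h1
    rw [_root_.map_smul, norm_smul, Complex.norm_real, Real.norm_eq_abs,
      abs_of_nonneg (inv_nonneg.2 hnf.le)] at h2
    calc ‖T f‖ = ‖f‖ * (‖f‖⁻¹ * ‖T f‖) := by field_simp
      _ ≤ ‖f‖ * ε := mul_le_mul_of_nonneg_left h2 hnf.le
      _ = ε * ‖f‖ := mul_comm _ _

lemma compact_small (hproj : IsIndicatorProj μ proj)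
    {W₀ : Lp ℂ 2 μ →L[ℂ] Lp ℂ 2 μ} (hW₀ : IsCompactOperator W₀)
    {ε : ℝ} (hε : 0 < ε) :
    ∃ δ : ℝ, 0 < δ ∧ ∀ Y : Set 𝒳, MeasurableSet Y → μ Y ≤ ENNReal.ofReal δ →
      ‖W₀.comp (proj Y)‖ ≤ ε := by
  by_contra hcon
  push_neg at hcon
  have hcon' : ∀ n : ℕ, ∃ Y, MeasurableSet Y ∧ μ Y ≤ ENNReal.ofReal (1/(n+1)) ∧
      ε < ‖W₀.comp (proj Y)‖ := by
    intro n
    obtain ⟨Y, h1, h2, h3⟩ := hcon (1/(n+1)) (by positivity)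
    exact ⟨Y, h1, h2, h3⟩
  choose Y hmeas hsmall hbig using hcon'
  have hex : ∀ n, ∃ f, ‖f‖ ≤ 1 ∧ ε < ‖(W₀.comp (proj (Y n))) f‖ :=
    fun n => exists_unit_vector _ hε.le (not_le.2 (hbig n))
  choose f hf1 hf2 using hex
  set h : ℕ → Lp ℂ 2 μ := fun n => proj (Y n) (f n) with hh
  have hh1 : ∀ n, ‖h n‖ ≤ 1 := fun n =>
    (norm_proj_apply_le hproj (hmeas n) (f n)).trans (hf1 n)
  have hW₀' : IsCompactOperator ⇑(W₀ : Lp ℂ 2 μ →ₗ[ℂ] Lp ℂ 2 μ) := hW₀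
  obtain ⟨K, hK, hWK⟩ := hW₀'.image_closedBall_subset_compact 1
  have hmem : ∀ n, W₀ (h n) ∈ K := fun n =>
    hWK ⟨h n, Metric.mem_closedBall.2 (by simpa using hh1 n), rfl⟩
  obtain ⟨g, hgK, φ, hφ, hg⟩ := hK.tendsto_subseq hmem
  have hεg : ε ≤ ‖g‖ := by
    refine ge_of_tendsto hg.norm (Filter.Eventually.of_forall fun n => ?_)
    have := hf2 (φ n)
    rw [ContinuousLinearMap.comp_apply] at this
    exact this.le
  set v : Lp ℂ 2 μ := ContinuousLinearMap.adjoint W₀ g with hv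
  have hbound : ∀ n, ‖(inner ℂ (W₀ (h n)) g)‖ ≤ ‖proj (Y n) v‖ := by
    intro n
    have e1 : (inner ℂ (W₀ (h n)) g) = inner ℂ (h n) v :=
      (ContinuousLinearMap.adjoint_inner_right W₀ (h n) g).symm
    have e2 : (inner ℂ (h n) v) = inner ℂ (f n) (proj (Y n) v) :=
      inner_proj_left hproj (hmeas n) (f n) v
    rw [e1, e2]
    calc ‖(inner ℂ (f n) (proj (Y n) v))‖ ≤ ‖f n‖ * ‖proj (Y n) v‖ :=
          norm_inner_le_norm _ _
      _ ≤ 1 * ‖proj (Y n) v‖ :=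
          mul_le_mul_of_nonneg_right (hf1 n) (norm_nonneg _)
      _ = ‖proj (Y n) v‖ := one_mul _
  have hlim0 : Filter.Tendsto (fun n => ‖proj (Y n) v‖) Filter.atTop (nhds 0) := by
    rw [Metric.tendsto_atTop]
    intro ε' hε'
    obtain ⟨δ, hδ, hδ2⟩ := (Lp.memLp v).eLpNorm_indicator_le one_le_two
      ENNReal.ofNat_ne_top (half_pos hε')
    obtain ⟨N, hN⟩ := exists_nat_gt (1/δ)
    refine ⟨N, fun n hn => ?_⟩
    have h1 : (1:ℝ)/(n+1) ≤ δ := by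
      rw [div_le_iff₀ (by positivity)]
      have : (1:ℝ)/δ < n + 1 := by
        calc (1:ℝ)/δ < N := hN
          _ ≤ n := by exact_mod_cast hn
          _ ≤ n + 1 := by linarith
      calc (1:ℝ) = δ * (1/δ) := by field_simp
        _ ≤ δ * (n+1) := by
            exact mul_le_mul_of_nonneg_left this.le hδ.le
    have h2 : μ (Y n) ≤ ENNReal.ofReal δ :=
      (hsmall n).trans (ENNReal.ofReal_le_ofReal h1)
    have h3 : eLpNorm (proj (Y n) v) 2 μ ≤ ENNReal.ofReal (ε'/2) := by
      rw [eLpNorm_congr_ae (hproj _ (hmeas n) v)]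
      exact hδ2 _ (hmeas n) h2
    have h4 : ‖proj (Y n) v‖ ≤ ε'/2 := by
      rw [Lp.norm_def]
      refine (ENNReal.toReal_mono ENNReal.ofReal_ne_top h3).trans ?_
      rw [ENNReal.toReal_ofReal (by positivity)]
    rw [Real.dist_eq, sub_zero, abs_of_nonneg (norm_nonneg _)]
    linarith
  have hA : Filter.Tendsto (fun n => (inner ℂ (W₀ (h (φ n))) g)) Filter.atTop
      (nhds (inner ℂ g g)) := hg.inner tendsto_const_nhds
  have hB : Filter.Tendsto (fun n => (inner ℂ (W₀ (h (φ n))) g)) Filter.atTop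
      (nhds 0) := by
    refine squeeze_zero_norm (fun n => hbound (φ n)) ?_
    exact hlim0.comp hφ.tendsto_atTop
  have hgg : (inner ℂ g g) = 0 := tendsto_nhds_unique hA hB
  have hg0 : g = 0 := inner_self_eq_zero.1 hgg
  rw [hg0, norm_zero] at hεg
  linarith

/-- small positive subsets exist -/
lemma exists_small_subset (hNA : ∀ X : Set 𝒳, MeasurableSet X → 0 < μ X →
      ∃ Y : Set 𝒳, MeasurableSet Y ∧ Y ⊆ X ∧ 0 < μ Y ∧ μ Y < μ X)
    {P : Set 𝒳} (hP : MeasurableSet P) (hP0 : 0 < μ P)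
    {c : ℝ≥0∞} (hc : c ≠ 0) :
    ∃ C, MeasurableSet C ∧ C ⊆ P ∧ 0 < μ C ∧ μ C ≤ c := by
  have half : ∀ k : ℕ, ∀ P : Set 𝒳, MeasurableSet P → 0 < μ P →
      ∃ C, MeasurableSet C ∧ C ⊆ P ∧ 0 < μ C ∧ μ C ≤ 2⁻¹ ^ k * μ P := by
    intro k
    induction k with
    | zero => intro P hP hP0; exact ⟨P, hP, subset_rfl, hP0, by simp⟩
    | succ k ih =>
      intro P hP hP0
      obtain ⟨C, hC, hCP, hC0, hCle⟩ := ih P hP hP0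
      obtain ⟨Z, hZ, hZC, hZ0, hZlt⟩ := hNA C hC hC0
      have hμC : μ C ≠ ⊤ := measure_ne_top μ C
      have hkey : ∃ D, MeasurableSet D ∧ D ⊆ C ∧ 0 < μ D ∧ μ D ≤ μ C * 2⁻¹ := by
        by_cases hcase : μ Z ≤ μ C * 2⁻¹
        · exact ⟨Z, hZ, hZC, hZ0, hcase⟩
        · push_neg at hcase
          refine ⟨C \ Z, hC.diff hZ, Set.diff_subset, ?_, ?_⟩
          · rw [measure_diff hZC hZ.nullMeasurableSet (measure_ne_top μ Z)]
            exact tsub_pos_iff_lt.2 hZlt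
          · rw [measure_diff hZC hZ.nullMeasurableSet (measure_ne_top μ Z)]
            calc μ C - μ Z ≤ μ C - μ C * 2⁻¹ := tsub_le_tsub_left hcase.le _
              _ = μ C * 2⁻¹ := by
                  have : μ C * 2⁻¹ = μ C / 2 := by
                    rw [ENNReal.div_eq_inv_mul, mul_comm]
                  rw [this, ENNReal.sub_half hμC]
      obtain ⟨D, hD, hDC, hD0, hDle⟩ := hkey
      refine ⟨D, hD, hDC.trans hCP, hD0, ?_⟩
      calc μ D ≤ μ C * 2⁻¹ := hDle
        _ ≤ (2⁻¹ ^ k * μ P) * 2⁻¹ := mul_le_mul_left hCle _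
        _ = 2⁻¹ ^ (k+1) * μ P := by ring
  obtain ⟨k, hk⟩ := ENNReal.exists_inv_two_pow_lt hc
  obtain ⟨C, hC, hCP, hC0, hCle⟩ := half k P hP hP0
  refine ⟨C, hC, hCP, hC0, hCle.trans ?_⟩
  calc 2⁻¹ ^ k * μ P ≤ 2⁻¹ ^ k * 1 := mul_le_mul_right prob_le_one _
    _ = 2⁻¹ ^ k := mul_one _
    _ ≤ c := hk.le

/-- greedy chunk: a subset of measure ≤ d which is ≥ d/2 when possible -/
lemma exists_chunk (hNA : ∀ X : Set 𝒳, MeasurableSet X → 0 < μ X →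
      ∃ Y : Set 𝒳, MeasurableSet Y ∧ Y ⊆ X ∧ 0 < μ Y ∧ μ Y < μ X)
    {R : Set 𝒳} (hR : MeasurableSet R) {d : ℝ≥0∞}
    (hd0 : d ≠ 0) (hdt : d ≠ ⊤) :
    ∃ B, MeasurableSet B ∧ B ⊆ R ∧ μ B ≤ d ∧ (d ≤ μ R → d / 2 ≤ μ B) := by
  classical
  have hstep : ∀ u : Set 𝒳, MeasurableSet u → u ⊆ R → μ u ≤ d →
      ∃ u' : Set 𝒳, MeasurableSet u' ∧ u' ⊆ R ∧ μ u' ≤ d ∧ u ⊆ u' ∧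
        (∀ C, MeasurableSet C → C ⊆ R \ u → μ u + μ C ≤ d →
          μ u + μ C / 2 ≤ μ u') := by
    intro u hu huR hud
    set S : Set (Set 𝒳) := {C | MeasurableSet C ∧ C ⊆ R \ u ∧ μ u + μ C ≤ d} with hS
    set t : ℝ≥0∞ := ⨆ C ∈ S, μ C with ht
    have htd : t ≤ d := by
      refine iSup_le fun C => iSup_le fun hC => le_trans le_add_self hC.2.2
    rcases eq_or_ne t 0 with ht0 | ht0
    · refine ⟨u, hu, huR, hud, subset_rfl, fun C hC hCR hCd => ?_⟩
      have h1 : μ C ≤ t := le_biSup _ (⟨hC, hCR, hCd⟩ : C ∈ S)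
      have h2 : μ C = 0 := le_antisymm (ht0 ▸ h1) (by simp)
      simp [h2]
    · have httop : t ≠ ⊤ := (htd.trans_lt (lt_top_iff_ne_top.2 hdt)).ne
      have hhalf : t / 2 < t := ENNReal.half_lt_self ht0 httop
      obtain ⟨C, hCS, hCt⟩ : ∃ C ∈ S, t / 2 < μ C := by
        by_contra hcc
        push_neg at hcc
        exact absurd (iSup_le fun C => iSup_le fun hC => hcc C hC) (not_le.2 hhalf)
      have hdisj : Disjoint u C :=
        Set.disjoint_of_subset_right hCS.2.1 disjoint_sdiff_self_right
      have hμuC : μ (u ∪ C) = μ u + μ C := measure_union hdisj hCS.1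
      refine ⟨u ∪ C, hu.union hCS.1,
        Set.union_subset huR (hCS.2.1.trans Set.diff_subset),
        by rw [hμuC]; exact hCS.2.2, Set.subset_union_left,
        fun C' hC' hC'R hC'd => ?_⟩
      rw [hμuC]
      refine add_le_add_right ?_ _
      have hC'le : μ C' ≤ t := le_biSup _ (⟨hC', hC'R, hC'd⟩ : C' ∈ S)
      calc μ C' / 2 ≤ t / 2 := ENNReal.div_le_div_right hC'le 2
        _ ≤ μ C := hCt.le
  -- iterate the step
  let T := {u : Set 𝒳 // MeasurableSet u ∧ u ⊆ R ∧ μ u ≤ d}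
  have hstep' : ∀ s : T, ∃ s' : T, s.1 ⊆ s'.1 ∧
      (∀ C, MeasurableSet C → C ⊆ R \ s.1 → μ s.1 + μ C ≤ d →
        μ s.1 + μ C / 2 ≤ μ s'.1) := by
    rintro ⟨u, hu1, hu2, hu3⟩
    obtain ⟨u', h1, h2, h3, h4, h5⟩ := hstep u hu1 hu2 hu3
    exact ⟨⟨u', h1, h2, h3⟩, h4, h5⟩
  let F : ℕ → T := fun n =>
    Nat.rec ⟨∅, MeasurableSet.empty, Set.empty_subset R, by simp⟩
      (fun _ s => (hstep' s).choose) n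
  have hFs : ∀ n, F (n+1) = (hstep' (F n)).choose := fun n => rfl
  have hFmono : ∀ n, (F n).1 ⊆ (F (n+1)).1 := fun n => by
    rw [hFs n]; exact (hstep' (F n)).choose_spec.1
  have hFmax : ∀ n, ∀ C, MeasurableSet C → C ⊆ R \ (F n).1 →
      μ (F n).1 + μ C ≤ d → μ (F n).1 + μ C / 2 ≤ μ (F (n+1)).1 := fun n => by
    rw [hFs n]; exact (hstep' (F n)).choose_spec.2
  set B : Set 𝒳 := ⋃ n, (F n).1 with hB
  have hBmeas : MeasurableSet B := MeasurableSet.iUnion fun n => (F n).2.1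
  have hBR : B ⊆ R := Set.iUnion_subset fun n => (F n).2.2.1
  have hmono : Monotone fun n => (F n).1 := monotone_nat_of_le_succ hFmono
  have hμB : μ B = ⨆ n, μ (F n).1 :=
    hmono.directed_le.measure_iUnion
  have hBd : μ B ≤ d := by
    rw [hμB]; exact iSup_le fun n => (F n).2.2.2
  refine ⟨B, hBmeas, hBR, hBd, fun hdR => ?_⟩
  by_contra hlt
  push_neg at hlt
  -- hlt : μ B < d / 2
  have hd2 : (d : ℝ≥0∞) / 2 ≠ 0 := by
    simp [ENNReal.div_eq_zero_iff, hd0]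
  have hRB : 0 < μ (R \ B) := by
    have h1 : μ (R \ B) = μ R - μ B :=
      measure_diff hBR hBmeas.nullMeasurableSet (measure_ne_top μ B)
    have h2 : d / 2 ≤ μ R - μ B := by
      have : d - d / 2 ≤ μ R - μ B :=
        tsub_le_tsub hdR hlt.le
      rwa [ENNReal.sub_half hdt] at this
    rw [h1]
    exact lt_of_lt_of_le (pos_iff_ne_zero.2 hd2) h2
  obtain ⟨C₀, hC₀m, hC₀s, hC₀0, hC₀le⟩ :=
    exists_small_subset hNA (hR.diff hBmeas) hRB (c := d/2) hd2
  set c : ℝ≥0∞ := μ C₀ / 2 with hc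
  have hc0 : c ≠ 0 := by
    simp [hc, ENNReal.div_eq_zero_iff, hC₀0.ne']
  have hfeas : ∀ n, μ (F n).1 + μ C₀ ≤ d := by
    intro n
    have h1 : μ (F n).1 ≤ μ B := measure_mono (Set.subset_iUnion (fun n => (F n).1) n)
    have h2 : μ (F n).1 < d / 2 := lt_of_le_of_lt h1 hlt
    calc μ (F n).1 + μ C₀ ≤ μ (F n).1 + d / 2 := add_le_add_right hC₀le _
      _ ≤ d / 2 + d / 2 := add_le_add_left h2.le _
      _ = d := ENNReal.add_halves d
  have hgrow : ∀ n : ℕ, (n : ℝ≥0∞) * c ≤ μ (F n).1 := by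
    intro n
    induction n with
    | zero => simp
    | succ n ih =>
      have h1 : μ (F n).1 + c ≤ μ (F (n+1)).1 := by
        refine hFmax n C₀ hC₀m (hC₀s.trans ?_) (hfeas n)
        exact Set.diff_subset_diff_right (Set.subset_iUnion (fun n => (F n).1) n)
      calc ((n+1 : ℕ) : ℝ≥0∞) * c = (n : ℝ≥0∞) * c + c := by
            push_cast; ring
        _ ≤ μ (F n).1 + c := add_le_add_left ih _
        _ ≤ μ (F (n+1)).1 := h1
  have hctop : c ≠ ⊤ := (ENNReal.div_lt_top (measure_ne_top μ C₀) two_ne_zero).ne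
  obtain ⟨n, hn⟩ := ENNReal.exists_nat_gt (ENNReal.div_lt_top hdt hc0).ne
  have hd_lt : d < (n : ℝ≥0∞) * c := by
    rw [← ENNReal.div_lt_iff (Or.inl hc0) (Or.inl hctop)]
    exact hn
  have : d < d := by
    calc d < (n : ℝ≥0∞) * c := hd_lt
      _ ≤ μ (F n).1 := hgrow n
      _ ≤ μ B := measure_mono (Set.subset_iUnion (fun n => (F n).1) n)
      _ ≤ d := hBd
  exact absurd this (lt_irrefl d)

/-- any measurable set can be finitely partitioned into pieces of measure ≤ d -/
lemma exists_pieces (hNA : ∀ X : Set 𝒳, MeasurableSet X → 0 < μ X →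
      ∃ Y : Set 𝒳, MeasurableSet Y ∧ Y ⊆ X ∧ 0 < μ Y ∧ μ Y < μ X)
    {d : ℝ≥0∞} (hd0 : d ≠ 0) (hdt : d ≠ ⊤)
    {X : Set 𝒳} (hX : MeasurableSet X) :
    ∃ (m : ℕ) (Z : Fin m → Set 𝒳), (∀ i, MeasurableSet (Z i)) ∧
      (∀ i, Z i ⊆ X) ∧ (∀ i, μ (Z i) ≤ d) ∧
      (∀ i j, i ≠ j → Z i ∩ Z j = ∅) ∧ (⋃ i, Z i) = X := by
  have main : ∀ (n : ℕ) (X : Set 𝒳), MeasurableSet X → μ X ≤ n * (d/2) + d →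
      ∃ (m : ℕ) (Z : Fin m → Set 𝒳), (∀ i, MeasurableSet (Z i)) ∧
      (∀ i, Z i ⊆ X) ∧ (∀ i, μ (Z i) ≤ d) ∧
      (∀ i j, i ≠ j → Z i ∩ Z j = ∅) ∧ (⋃ i, Z i) = X := by
    intro n
    induction n with
    | zero =>
      intro X hX hXd
      refine ⟨1, fun _ => X, fun _ => hX, fun _ => subset_rfl,
        fun _ => by simpa using hXd, fun i j hij => absurd (Subsingleton.elim i j) hij,
        Set.iUnion_const X⟩
    | succ n ih =>
      intro X hX hXd
      by_cases hsmall : μ X ≤ d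
      · refine ⟨1, fun _ => X, fun _ => hX, fun _ => subset_rfl,
          fun _ => hsmall, fun i j hij => absurd (Subsingleton.elim i j) hij,
          Set.iUnion_const X⟩
      · push_neg at hsmall
        obtain ⟨B, hBm, hBX, hBd, hBge⟩ := exists_chunk hNA hX hd0 hdt
        have hge : d / 2 ≤ μ B := hBge hsmall.le
        have harith : μ (X \ B) ≤ n * (d/2) + d := by
          have hd2t : (d/2 : ℝ≥0∞) ≠ ⊤ :=
            (ENNReal.div_lt_top hdt two_ne_zero).ne
          rw [← ENNReal.add_le_add_iff_right hd2t]
          have h1 : μ (X \ B) + d/2 ≤ μ (X \ B) + μ B := add_le_add_right hge _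
          have h2 : μ (X \ B) + μ B = μ X := by
            rw [← measure_union disjoint_sdiff_self_left hBm, Set.diff_union_self,
              Set.union_eq_self_of_subset_right hBX]
          have h3 : μ X ≤ (n+1 : ℕ) * (d/2) + d := hXd
          have h4 : ((n+1 : ℕ) : ℝ≥0∞) * (d/2) + d = (n * (d/2) + d) + d/2 := by
            push_cast; ring
          calc μ (X \ B) + d/2 ≤ μ X := h1.trans_eq h2
            _ ≤ ((n+1 : ℕ) : ℝ≥0∞) * (d/2) + d := h3
            _ = (n * (d/2) + d) + d/2 := h4
        obtain ⟨m, Z, hZm, hZX, hZd, hZdisj, hZun⟩ := ih (X \ B) (hX.diff hBm) harith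
        refine ⟨m + 1, Fin.cons B Z, ?_, ?_, ?_, ?_, ?_⟩
        · intro i
          refine Fin.cases ?_ ?_ i
          · exact hBm
          · exact fun j => hZm j
        · intro i
          refine Fin.cases ?_ ?_ i
          · exact hBX
          · exact fun j => (hZX j).trans Set.diff_subset
        · intro i
          refine Fin.cases ?_ ?_ i
          · exact hBd
          · exact fun j => hZd j
        · intro i j hij
          obtain rfl | ⟨i', rfl⟩ := i.eq_zero_or_eq_succ <;>
            obtain rfl | ⟨j', rfl⟩ := j.eq_zero_or_eq_succ
          · exact absurd rfl hij
          · simp only [Fin.cons_zero, Fin.cons_succ]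
            apply Set.eq_empty_of_subset_empty
            rintro x ⟨hx1, hx2⟩
            exact ((hZX j') hx2).2 hx1
          · simp only [Fin.cons_zero, Fin.cons_succ]
            apply Set.eq_empty_of_subset_empty
            rintro x ⟨hx1, hx2⟩
            exact ((hZX i') hx1).2 hx2
          · simp only [Fin.cons_succ]
            refine hZdisj i' j' fun hc => hij ?_
            rw [hc]
        · have : (⋃ i, (Fin.cons B Z : Fin (m+1) → Set 𝒳) i) = B ∪ ⋃ j, Z j := by
            ext x
            simp only [Set.mem_iUnion, Set.mem_union]
            constructor
            · rintro ⟨i, hi⟩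
              revert hi
              refine Fin.cases ?_ ?_ i
              · exact fun h => Or.inl h
              · exact fun j h => Or.inr ⟨j, by simpa using h⟩
            · rintro (h | ⟨j, hj⟩)
              · exact ⟨0, h⟩
              · exact ⟨j.succ, by simpa using hj⟩
          rw [this, hZun, Set.union_diff_cancel hBX]
  obtain ⟨n, hn⟩ := ENNReal.exists_nat_gt
    ((ENNReal.div_lt_top (by simp) (by simp [ENNReal.div_eq_zero_iff, hd0, hdt] :
      (d/2 : ℝ≥0∞) ≠ 0)).ne : (1 : ℝ≥0∞) / (d/2) ≠ ⊤)
  refine main n X hX ?_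
  have hd2 : (d/2 : ℝ≥0∞) ≠ 0 := by simp [ENNReal.div_eq_zero_iff, hd0, hdt]
  have hd2t : (d/2 : ℝ≥0∞) ≠ ⊤ := (ENNReal.div_lt_top hdt two_ne_zero).ne
  have h1 : (1 : ℝ≥0∞) < n * (d/2) := by
    rw [← ENNReal.div_lt_iff (Or.inl hd2) (Or.inl hd2t)]
    exact hn
  calc μ X ≤ 1 := prob_le_one
    _ ≤ n * (d/2) := h1.le
    _ ≤ n * (d/2) + d := le_add_self.trans_eq (add_comm _ _)

lemma sum_measure_le_one (χ : Partition μ) :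
    ∑ j, (μ (χ.Y j)).toReal ≤ 1 := by
  have h1 : μ (⋃ j, χ.Y j) = ∑' j, μ (χ.Y j) :=
    measure_iUnion₀ (fun j k hjk => χ.disj j k hjk)
      (fun j => (χ.meas j).nullMeasurableSet)
  rw [tsum_fintype] at h1
  calc ∑ j, (μ (χ.Y j)).toReal
      = (∑ j, μ (χ.Y j)).toReal :=
        (ENNReal.toReal_sum fun j _ => measure_ne_top μ _).symm
    _ = (μ (⋃ j, χ.Y j)).toReal := by rw [h1]
    _ ≤ (μ (Set.univ : Set 𝒳)).toReal := by
        refine ENNReal.toReal_mono (measure_ne_top μ _) (measure_mono (Set.subset_univ _))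
    _ = 1 := by simp

lemma exists_refinement (hproj : IsIndicatorProj μ proj)
    (hNA : ∀ X : Set 𝒳, MeasurableSet X → 0 < μ X →
      ∃ Y : Set 𝒳, MeasurableSet Y ∧ Y ⊆ X ∧ 0 < μ Y ∧ μ Y < μ X)
    (χ : Partition μ) {d : ℝ≥0∞} (hd0 : d ≠ 0) (hdt : d ≠ ⊤) :
    ∃ χ' : Partition μ, (∀ p, μ (χ'.Y p) ≤ d) ∧
      ∀ W : Lp ℂ 2 μ →L[ℂ] Lp ℂ 2 μ, M μ proj W χ' ≤ M μ proj W χ := by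
  classical
  choose m Z hZm hZsub hZd hZdisj hZun using fun j : Fin χ.J =>
    exists_pieces hNA hd0 hdt (χ.meas j)
  set N : ℕ := Finset.univ.sup m with hN
  have hmN : ∀ j, m j ≤ N := fun j => Finset.le_sup (Finset.mem_univ j)
  set Z' : Fin χ.J → Fin N → Set 𝒳 := fun j i =>
    if h : (i : ℕ) < m j then Z j ⟨i, h⟩ else ∅ with hZ'
  have hZ'm : ∀ j i, MeasurableSet (Z' j i) := by
    intro j i; dsimp only [Z']; split
    · exact hZm j _
    · exact MeasurableSet.empty
  have hZ'sub : ∀ j i, Z' j i ⊆ χ.Y j := by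
    intro j i; dsimp only [Z']; split
    · exact hZsub j _
    · exact Set.empty_subset _
  have hZ'd : ∀ j i, μ (Z' j i) ≤ d := by
    intro j i; dsimp only [Z']; split
    · exact hZd j _
    · simp
  have hZ'un : ∀ j, (⋃ i, Z' j i) = χ.Y j := by
    intro j
    rw [← hZun j]
    ext x
    simp only [Set.mem_iUnion]
    constructor
    · rintro ⟨i, hi⟩
      dsimp only [Z'] at hi
      split at hi
      · exact ⟨_, hi⟩
      · exact absurd hi (Set.notMem_empty x)
    · rintro ⟨i, hi⟩
      refine ⟨⟨(i : ℕ), lt_of_lt_of_le i.2 (hmN j)⟩, ?_⟩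
      dsimp only [Z']
      rw [dif_pos i.2]
      simpa using hi
  have hZ'disj : ∀ j (i i' : Fin N), i ≠ i' → Z' j i ∩ Z' j i' = ∅ := by
    intro j i i' hii
    dsimp only [Z']
    split
    · split
      · refine hZdisj j _ _ ?_
        intro hc
        apply hii
        have := congrArg Fin.val hc
        simpa [Fin.ext_iff] using this
      · simp
    · simp
  have hsum : ∀ j, ∑ i, (μ (Z' j i)).toReal = (μ (χ.Y j)).toReal := by
    intro j
    rw [← hZ'un j, measure_iUnion ?_ (hZ'm j), tsum_fintype,
      ENNReal.toReal_sum fun i _ => measure_ne_top μ _]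
    intro a b hab
    rw [Function.onFun, Set.disjoint_iff_inter_eq_empty]
    exact hZ'disj j a b hab
  set e := finProdFinEquiv (m := χ.J) (n := N) with he
  refine ⟨⟨χ.J * N, fun p => Z' (e.symm p).1 (e.symm p).2, fun p => hZ'm _ _, ?_, ?_⟩,
    fun p => hZ'd _ _, fun W => ?_⟩
  · have hun : (⋃ p, Z' (e.symm p).1 (e.symm p).2) = ⋃ j, χ.Y j := by
      ext x
      simp only [Set.mem_iUnion]
      constructor
      · rintro ⟨p, hp⟩
        exact ⟨(e.symm p).1, (hZ'sub _ _) hp⟩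
      · rintro ⟨j, hj⟩
        rw [← hZ'un j] at hj
        simp only [Set.mem_iUnion] at hj
        obtain ⟨i, hi⟩ := hj
        refine ⟨e (j, i), ?_⟩
        rw [Equiv.symm_apply_apply]
        exact hi
    rw [hun]
    exact χ.cover
  · intro p q hpq
    show μ (Z' (e.symm p).1 (e.symm p).2 ∩ Z' (e.symm q).1 (e.symm q).2) = 0
    by_cases hj : (e.symm p).1 = (e.symm q).1
    · have hne : e.symm p ≠ e.symm q := fun hc => hpq (by
        have := congrArg e hc
        simpa using this)
      have hi : (e.symm p).2 ≠ (e.symm q).2 := fun hc => hne (Prod.ext hj hc)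
      rw [hj, hZ'disj _ _ _ hi]
      exact measure_empty
    · refine measure_mono_null ?_ (χ.disj _ _ hj)
      exact Set.inter_subset_inter (hZ'sub _ _) (hZ'sub _ _)
  · show (∑ p, _) ≤ M μ proj W χ
    unfold M
    have hre : ∀ f : Fin (χ.J * N) → ℝ, ∑ p, f p = ∑ q : Fin χ.J × Fin N, f (e q) :=
      fun f => (Equiv.sum_comp e f).symm
    rw [hre]
    simp only [Equiv.symm_apply_apply]
    rw [Fintype.sum_prod_type]
    refine Finset.sum_le_sum fun j _ => ?_
    calc ∑ i, (μ (Z' j i)).toReal * ‖W.comp (proj (Z' j i))‖ ^ 2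
        ≤ ∑ i, (μ (Z' j i)).toReal * ‖W.comp (proj (χ.Y j))‖ ^ 2 := by
          refine Finset.sum_le_sum fun i _ => ?_
          refine mul_le_mul_of_nonneg_left ?_ ENNReal.toReal_nonneg
          exact pow_le_pow_left₀ (norm_nonneg _)
            (norm_comp_proj_mono hproj (hZ'm j i) (χ.meas j) (hZ'sub j i) W) 2
      _ = (∑ i, (μ (Z' j i)).toReal) * ‖W.comp (proj (χ.Y j))‖ ^ 2 :=
          (Finset.sum_mul _ _ _).symm
      _ = (μ (χ.Y j)).toReal * ‖W.comp (proj (χ.Y j))‖ ^ 2 := by rw [hsum j]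


lemma sqrt_sum_sq_le {n : ℕ} {a b c : Fin n → ℝ} (ha : ∀ j, 0 ≤ a j)
    (hb : ∀ j, 0 ≤ b j) (hc : ∀ j, 0 ≤ c j) (h : ∀ j, c j ≤ a j + b j) :
    Real.sqrt (∑ j, c j ^ 2) ≤ Real.sqrt (∑ j, a j ^ 2) + Real.sqrt (∑ j, b j ^ 2) := by
  set A : EuclideanSpace ℝ (Fin n) := (WithLp.equiv 2 (Fin n → ℝ)).symm a with hA
  set B : EuclideanSpace ℝ (Fin n) := (WithLp.equiv 2 (Fin n → ℝ)).symm b with hB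
  have keyA : ‖A‖ = Real.sqrt (∑ j, a j ^ 2) := by
    rw [EuclideanSpace.norm_eq]
    congr 1
    refine Finset.sum_congr rfl fun j _ => ?_
    rw [hA, WithLp.equiv_symm_apply, PiLp.toLp_apply, Real.norm_eq_abs, sq_abs]
  have keyB : ‖B‖ = Real.sqrt (∑ j, b j ^ 2) := by
    rw [EuclideanSpace.norm_eq]
    congr 1
    refine Finset.sum_congr rfl fun j _ => ?_
    rw [hB, WithLp.equiv_symm_apply, PiLp.toLp_apply, Real.norm_eq_abs, sq_abs]
  have keyAB : ‖A + B‖ = Real.sqrt (∑ j, (a j + b j) ^ 2) := by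
    rw [EuclideanSpace.norm_eq]
    congr 1
    refine Finset.sum_congr rfl fun j _ => ?_
    rw [PiLp.add_apply, hA, hB, WithLp.equiv_symm_apply,
      PiLp.toLp_apply, PiLp.toLp_apply, Real.norm_eq_abs, sq_abs]
  have h1 : Real.sqrt (∑ j, c j ^ 2) ≤ Real.sqrt (∑ j, (a j + b j) ^ 2) := by
    refine Real.sqrt_le_sqrt (Finset.sum_le_sum fun j _ => ?_)
    exact pow_le_pow_left₀ (hc j) (h j) 2
  calc Real.sqrt (∑ j, c j ^ 2) ≤ Real.sqrt (∑ j, (a j + b j) ^ 2) := h1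
    _ = ‖A + B‖ := keyAB.symm
    _ ≤ ‖A‖ + ‖B‖ := norm_add_le _ _
    _ = Real.sqrt (∑ j, a j ^ 2) + Real.sqrt (∑ j, b j ^ 2) := by rw [keyA, keyB]

lemma sqrt_M_add_le (A B : Lp ℂ 2 μ →L[ℂ] Lp ℂ 2 μ) (χ : Partition μ) :
    Real.sqrt (M μ proj (A + B) χ) ≤
      Real.sqrt (M μ proj A χ) + Real.sqrt (M μ proj B χ) := by
  have hM : ∀ W : Lp ℂ 2 μ →L[ℂ] Lp ℂ 2 μ, M μ proj W χ =
      ∑ j, (Real.sqrt ((μ (χ.Y j)).toReal) * ‖W.comp (proj (χ.Y j))‖) ^ 2 := by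
    intro W
    unfold M
    refine Finset.sum_congr rfl fun j _ => ?_
    rw [mul_pow, Real.sq_sqrt ENNReal.toReal_nonneg]
  rw [hM A, hM B, hM (A + B)]
  refine sqrt_sum_sq_le (fun j => mul_nonneg (Real.sqrt_nonneg _) (norm_nonneg _))
    (fun j => mul_nonneg (Real.sqrt_nonneg _) (norm_nonneg _))
    (fun j => mul_nonneg (Real.sqrt_nonneg _) (norm_nonneg _)) (fun j => ?_)
  rw [← mul_add]
  refine mul_le_mul_of_nonneg_left ?_ (Real.sqrt_nonneg _)
  have : (A + B).comp (proj (χ.Y j)) = A.comp (proj (χ.Y j)) + B.comp (proj (χ.Y j)) :=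
    ContinuousLinearMap.add_comp _ _ _
  rw [this]
  exact norm_add_le _ _

instance partition_nonempty : Nonempty (Partition μ) :=
  ⟨⟨1, fun _ => Set.univ, fun _ => MeasurableSet.univ, by rw [Set.iUnion_const]; simp,
    fun j k h => absurd (Subsingleton.elim j k) h⟩⟩

lemma munorm_bddBelow (W : Lp ℂ 2 μ →L[ℂ] Lp ℂ 2 μ) :
    BddBelow (Set.range fun χ : Partition μ => Real.sqrt (M μ proj W χ)) := by
  refine ⟨0, ?_⟩
  rintro x ⟨χ, rfl⟩
  exact Real.sqrt_nonneg _

lemma munorm_le_sqrt (W : Lp ℂ 2 μ →L[ℂ] Lp ℂ 2 μ) (χ : Partition μ) :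
    munorm μ proj W ≤ Real.sqrt (M μ proj W χ) :=
  ciInf_le (munorm_bddBelow W) χ

lemma munorm_nonneg (W : Lp ℂ 2 μ →L[ℂ] Lp ℂ 2 μ) : 0 ≤ munorm μ proj W :=
  Real.iInf_nonneg fun χ => Real.sqrt_nonneg _

lemma munorm_add_compact_le (hproj : IsIndicatorProj μ proj)
    (hNA : ∀ X : Set 𝒳, MeasurableSet X → 0 < μ X →
      ∃ Y : Set 𝒳, MeasurableSet Y ∧ Y ⊆ X ∧ 0 < μ Y ∧ μ Y < μ X)
    (A B : Lp ℂ 2 μ →L[ℂ] Lp ℂ 2 μ) (hB : IsCompactOperator B)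
    {ε : ℝ} (hε : 0 < ε) :
    munorm μ proj (A + B) ≤ munorm μ proj A + ε := by
  obtain ⟨δ, hδ, hsmall⟩ := compact_small hproj hB (half_pos hε)
  have h1 : munorm μ proj A < munorm μ proj A + ε/2 :=
    lt_add_of_pos_right _ (half_pos hε)
  obtain ⟨χ, hχ⟩ := exists_lt_of_ciInf_lt h1
  obtain ⟨χ', hp, hMle⟩ := exists_refinement hproj hNA χ
    (d := ENNReal.ofReal δ) (ENNReal.ofReal_pos.2 hδ).ne' ENNReal.ofReal_ne_top
  have hMB : M μ proj B χ' ≤ (ε/2)^2 := by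
    unfold M
    calc ∑ p, (μ (χ'.Y p)).toReal * ‖B.comp (proj (χ'.Y p))‖^2
        ≤ ∑ p, (μ (χ'.Y p)).toReal * (ε/2)^2 := by
          refine Finset.sum_le_sum fun p _ => ?_
          exact mul_le_mul_of_nonneg_left
            (pow_le_pow_left₀ (norm_nonneg _) (hsmall _ (χ'.meas p) (hp p)) 2)
            ENNReal.toReal_nonneg
      _ = (∑ p, (μ (χ'.Y p)).toReal) * (ε/2)^2 := (Finset.sum_mul _ _ _).symm
      _ ≤ 1 * (ε/2)^2 :=
          mul_le_mul_of_nonneg_right (sum_measure_le_one χ') (sq_nonneg _)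
      _ = (ε/2)^2 := one_mul _
  have hsB : Real.sqrt (M μ proj B χ') ≤ ε/2 := by
    refine (Real.sqrt_le_sqrt hMB).trans ?_
    rw [Real.sqrt_sq (half_pos hε).le]
  calc munorm μ proj (A+B) ≤ Real.sqrt (M μ proj (A+B) χ') := munorm_le_sqrt _ χ'
    _ ≤ Real.sqrt (M μ proj A χ') + Real.sqrt (M μ proj B χ') := sqrt_M_add_le A B χ'
    _ ≤ Real.sqrt (M μ proj A χ) + (ε/2) :=
        add_le_add (Real.sqrt_le_sqrt (hMle A)) hsB
    _ ≤ (munorm μ proj A + ε/2) + ε/2 := add_le_add_left hχ.le _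
    _ = munorm μ proj A + ε := by ring


end Aux

theorem munorm_compact_eq_zero (μ : Measure 𝒳) [IsProbabilityMeasure μ]
    (proj : Set 𝒳 → (Lp ℂ 2 μ →L[ℂ] Lp ℂ 2 μ))
    (hproj : IsIndicatorProj μ proj)
    (hNoAtoms : ∀ X : Set 𝒳, MeasurableSet X → 0 < μ X →
      ∃ Y : Set 𝒳, MeasurableSet Y ∧ Y ⊆ X ∧ 0 < μ Y ∧ μ Y < μ X) :
    (∀ W₀ : Lp ℂ 2 μ →L[ℂ] Lp ℂ 2 μ, IsCompactOperator W₀ → munorm μ proj W₀ = 0) ∧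
    (∀ (W W₀ : Lp ℂ 2 μ →L[ℂ] Lp ℂ 2 μ), IsCompactOperator W₀ →
      munorm μ proj (W + W₀) = munorm μ proj W) := by
  have hzero : munorm μ proj 0 = 0 := by
    have hM0 : ∀ χ : Partition μ, Real.sqrt (M μ proj (0 : Lp ℂ 2 μ →L[ℂ] Lp ℂ 2 μ) χ) = 0 := by
      intro χ
      have : M μ proj (0 : Lp ℂ 2 μ →L[ℂ] Lp ℂ 2 μ) χ = 0 := by
        unfold M
        refine Finset.sum_eq_zero fun j _ => ?_
        rw [ContinuousLinearMap.zero_comp, norm_zero]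
        ring
      rw [this, Real.sqrt_zero]
    unfold munorm
    simp only [hM0]
    exact ciInf_const
  constructor
  · intro W₀ hW₀
    refine le_antisymm (le_of_forall_pos_le_add fun ε hε => ?_) (munorm_nonneg W₀)
    have h0 := munorm_add_compact_le hproj hNoAtoms 0 W₀ hW₀ hε
    rw [zero_add, hzero, zero_add] at h0
    simpa using h0
  · intro W W₀ hW₀
    refine le_antisymm (le_of_forall_pos_le_add fun ε hε => ?_)
      (le_of_forall_pos_le_add fun ε hε => ?_)
    · exact munorm_add_compact_le hproj hNoAtoms W W₀ hW₀ hε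
    · have hneg : IsCompactOperator ⇑(-W₀) := hW₀.neg
      have h0 := munorm_add_compact_le hproj hNoAtoms (W + W₀) (-W₀) hneg hε
      rwa [add_neg_cancel_right] at h0


end MuNorm
end
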